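/- arXiv:1911.09628 — 4 statements merged into one kernel-verified Lean document; each statement's English description precedes it below -/
import Mathlib

section
/- Let (Ω, μ) be a finite measure space, let ν > 0, and let a ≤ b be real numbers. Let p ∈ L²(μ) and let u : Ω → ℝ be measurable with a ≤ u(x) ≤ b for μ-a.e. x (so u ∈ L²(μ)). Then the following are equivalent: (i) for every measurable v : Ω → ℝ with a ≤ v(x) ≤ b μ-a.e., one has ∫_Ω (p(x) + ν·u(x))·(v(x) − u(x)) dμ(x) ≥ 0; (ii) u(x) = Π_{[a,b]}(−p(x)/ν) for μ-a.e. x ∈ Ω. -/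
/-!
Writing `t = -p / ν`, the integrand is `ν (u - t)(v - u)`, so the inequality is the
pointwise obtuse-angle characterization of the projection onto `[a, b]`, integrated.
Conversely, testing with `v = Π_{[a,b]} t` gives `0 ≤ ∫ (u - t)(v - u) ≤ -∫ (v - u)²`,
which forces `u = v` almost everywhere.
-/

open MeasureTheory

/-- The projection of `ℝ` onto the interval `[a, b]`: `Π_{[a,b]}(s) = min b (max a s)`. -/
def projInterval (a b s : ℝ) : ℝ := min b (max a s)

lemma projInterval_mem {a b : ℝ} (hab : a ≤ b) (s : ℝ) :
    a ≤ projInterval a b s ∧ projInterval a b s ≤ b :=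
  ⟨le_min hab (le_max_left a s), min_le_left _ _⟩

lemma continuous_projInterval (a b : ℝ) : Continuous (projInterval a b) :=
  continuous_const.min (continuous_const.max continuous_id)

lemma projInterval_sub_mul_sub_nonneg {a b c : ℝ} (hac : a ≤ c) (hcb : c ≤ b) (s : ℝ) :
    0 ≤ (projInterval a b s - s) * (c - projInterval a b s) := by
  unfold projInterval
  rcases le_total s a with hsa | has
  · rw [max_eq_left hsa, min_eq_right (hac.trans hcb)]
    exact mul_nonneg (sub_nonneg.2 hsa) (sub_nonneg.2 hac)
  · rw [max_eq_right has]
    rcases le_total s b with hsb | hbs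
    · simp [min_eq_right hsb]
    · rw [min_eq_left hbs]
      exact mul_nonneg_of_nonpos_of_nonpos (sub_nonpos.2 hbs) (sub_nonpos.2 hcb)

lemma sub_mul_projInterval_sub_le_neg_sq {a b c : ℝ} (hac : a ≤ c) (hcb : c ≤ b) (s : ℝ) :
    (c - s) * (projInterval a b s - c) ≤ -(projInterval a b s - c) ^ 2 := by
  have h := projInterval_sub_mul_sub_nonneg hac hcb s
  nlinarith

section Integral

variable {Ω : Type*} [MeasurableSpace Ω] {μ : Measure Ω}

lemma ae_eq_zero_of_nonpos_of_integral_nonneg {f : Ω → ℝ} (hf : Integrable f μ)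
    (hf0 : f ≤ᵐ[μ] 0) (h : 0 ≤ ∫ x, f x ∂μ) : f =ᵐ[μ] 0 := by
  refine (integral_eq_iff_of_ae_le hf (integrable_zero _ _ _) hf0).1 ?_
  simpa using le_antisymm (integral_nonpos_of_ae hf0) h

lemma integrable_sub_mul_sub [IsFiniteMeasure μ] {a b : ℝ} {t u v : Ω → ℝ}
    (ht : Integrable t μ) (hum : AEMeasurable u μ) (hu : ∀ᵐ x ∂μ, a ≤ u x ∧ u x ≤ b)
    (hvm : AEMeasurable v μ) (hv : ∀ᵐ x ∂μ, a ≤ v x ∧ v x ≤ b) :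
    Integrable (fun x => (u x - t x) * (v x - u x)) μ := by
  refine ((Integrable.of_mem_Icc a b hum hu).sub ht).mul_bdd
    (hvm.sub hum).aestronglyMeasurable (c := b - a) ?_
  filter_upwards [hu, hv] with x hux hvx
  rw [Real.norm_eq_abs, abs_le]
  constructor <;> linarith [hux.1, hux.2, hvx.1, hvx.2]

theorem integral_sub_mul_sub_nonneg_iff_ae_eq_projInterval [IsFiniteMeasure μ]
    {a b : ℝ} (hab : a ≤ b) {t u : Ω → ℝ} (htm : Measurable t) (ht : Integrable t μ)
    (hum : Measurable u) (hu : ∀ᵐ x ∂μ, a ≤ u x ∧ u x ≤ b) :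
    (∀ v : Ω → ℝ, Measurable v → (∀ᵐ x ∂μ, a ≤ v x ∧ v x ≤ b) →
        0 ≤ ∫ x, (u x - t x) * (v x - u x) ∂μ) ↔
      ∀ᵐ x ∂μ, u x = projInterval a b (t x) := by
  set w : Ω → ℝ := fun x => projInterval a b (t x)
  have hwm : Measurable w := (continuous_projInterval a b).measurable.comp htm
  have hw : ∀ᵐ x ∂μ, a ≤ w x ∧ w x ≤ b := .of_forall fun x => projInterval_mem hab (t x)
  constructor
  · intro h
    have hle : ∀ᵐ x ∂μ, (u x - t x) * (w x - u x) ≤ -(w x - u x) ^ 2 := by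
      filter_upwards [hu] with x hx using sub_mul_projInterval_sub_le_neg_sq hx.1 hx.2 (t x)
    have hzero : (fun x => (u x - t x) * (w x - u x)) =ᵐ[μ] 0 :=
      ae_eq_zero_of_nonpos_of_integral_nonneg
        (integrable_sub_mul_sub ht hum.aemeasurable hu hwm.aemeasurable hw)
        (hle.mono fun x hx => hx.trans (neg_nonpos.2 (sq_nonneg _))) (h w hwm hw)
    filter_upwards [hle, hzero] with x hx hx0
    have hsq : (w x - u x) ^ 2 = 0 :=
      le_antisymm (by simpa [hx0] using hx) (sq_nonneg _)
    exact (sub_eq_zero.1 (pow_eq_zero_iff two_ne_zero |>.1 hsq)).symm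
  · intro h v _ hv
    refine integral_nonneg_of_ae ?_
    filter_upwards [h, hv] with x hux hvx
    rw [hux]
    exact projInterval_sub_mul_sub_nonneg hvx.1 hvx.2 (t x)

end Integral

/-- On a finite measure space, for `ν > 0`, `a ≤ b`, `p ∈ L²(μ)` and a measurable `u`
with `a ≤ u ≤ b` a.e., the variational inequality
`∫ (p + ν u)(v - u) dμ ≥ 0` for all admissible `v` holds iff
`u = Π_{[a,b]}(-p/ν)` a.e. -/
theorem integral_variational_inequality_iff_projection
    {Ω : Type*} [MeasurableSpace Ω] (μ : Measure Ω) [IsFiniteMeasure μ]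
    (ν a b : ℝ) (hν : 0 < ν) (hab : a ≤ b)
    (p u : Ω → ℝ) (hpm : Measurable p) (hp : MemLp p 2 μ)
    (hum : Measurable u) (hu : ∀ᵐ x ∂μ, a ≤ u x ∧ u x ≤ b) :
    (∀ v : Ω → ℝ, Measurable v → (∀ᵐ x ∂μ, a ≤ v x ∧ v x ≤ b) →
        0 ≤ ∫ x, (p x + ν * u x) * (v x - u x) ∂μ) ↔
      (∀ᵐ x ∂μ, u x = projInterval a b (-(p x) / ν)) := by
  have hrescale : ∀ x, p x + ν * u x = ν * (u x - -p x / ν) := fun x => by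
    field_simp
    ring
  simp_rw [hrescale, mul_assoc, integral_const_mul, mul_nonneg_iff_of_pos_left hν]
  exact integral_sub_mul_sub_nonneg_iff_ae_eq_projInterval hab (hpm.neg.div_const ν)
    ((hp.integrable one_le_two).neg.div_const ν) hum hu
end

section
/- Let ν > 0, τ > 0, and let a ≤ b be real numbers. Let p, q ∈ ℝ satisfy 2·|p − q| ≤ τ, and set u := Π_{[a,b]}(−p/ν) and v := Π_{[a,b]}(−q/ν). If p + ν·u > τ, then u = v = a; if p + ν·u < −τ, then u = v = b. In particular, whenever |p + ν·u| > τ one has v = u. -/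
/-!
If `p + ν Π(-p/ν) > 0` then `-p/ν` cannot lie above `a`, since there the projection is at most
`-p/ν`; so the projection sits at the lower bound `a`. With `|p - q| ≤ τ/2`, the margin
`p + ν a > τ` leaves `q + ν a > τ/2 ≥ 0`, which clamps `-q/ν` to `a` as well. The case
`p + ν u < -τ` is symmetric.
-/

namespace projInterval

variable {a b s : ℝ}

theorem eq_left_of_le (hab : a ≤ b) (hs : s ≤ a) : projInterval a b s = a := by
  rw [projInterval, max_eq_left hs, min_eq_right hab]

theorem eq_right_of_ge (hab : a ≤ b) (hs : b ≤ s) : projInterval a b s = b := by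
  rw [projInterval, max_eq_right (hab.trans hs), min_eq_left hs]

theorem le_self_of_le (hs : a ≤ s) : projInterval a b s ≤ s := by
  rw [projInterval, max_eq_right hs]
  exact min_le_right b s

theorem self_le_of_le (hs : s ≤ b) : s ≤ projInterval a b s :=
  le_min hs (le_max_right a s)

variable {ν p : ℝ}

theorem neg_div_eq_left (hν : 0 < ν) (hab : a ≤ b) (h : 0 ≤ p + ν * a) :
    projInterval a b (-p / ν) = a :=
  eq_left_of_le hab <| (div_le_iff₀ hν).2 (by linarith)

theorem neg_div_eq_right (hν : 0 < ν) (hab : a ≤ b) (h : p + ν * b ≤ 0) :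
    projInterval a b (-p / ν) = b :=
  eq_right_of_ge hab <| (le_div_iff₀ hν).2 (by linarith)

theorem neg_div_eq_left_of_pos (hν : 0 < ν) (hab : a ≤ b)
    (h : 0 < p + ν * projInterval a b (-p / ν)) : projInterval a b (-p / ν) = a := by
  refine eq_left_of_le hab (le_of_not_ge fun has => h.not_ge ?_)
  have := mul_le_mul_of_nonneg_left (le_self_of_le (b := b) has) hν.le
  rw [mul_div_cancel₀ _ hν.ne'] at this
  linarith

theorem neg_div_eq_right_of_neg (hν : 0 < ν) (hab : a ≤ b)
    (h : p + ν * projInterval a b (-p / ν) < 0) : projInterval a b (-p / ν) = b := by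
  refine eq_right_of_ge hab (le_of_not_ge fun hsb => h.not_ge ?_)
  have := mul_le_mul_of_nonneg_left (self_le_of_le (a := a) hsb) hν.le
  rw [mul_div_cancel₀ _ hν.ne'] at this
  linarith

end projInterval

open projInterval in
theorem projection_critical_cone_pointwise_general
    (ν τ a b p q u v : ℝ) (hν : 0 < ν) (hab : a ≤ b)
    (hpq : 2 * |p - q| ≤ τ)
    (hu : u = projInterval a b (-p / ν)) (hv : v = projInterval a b (-q / ν)) :
    (τ < p + ν * u → u = a ∧ v = a) ∧
      (p + ν * u < -τ → u = b ∧ v = b) ∧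
      (τ < |p + ν * u| → v = u) := by
  have hpq₁ := le_abs_self (p - q)
  have hpq₂ := neg_abs_le (p - q)
  have hτ : 0 ≤ τ := by linarith [abs_nonneg (p - q)]
  have upper (h : τ < p + ν * u) : u = a ∧ v = a := by
    have hua : u = a := hu ▸ neg_div_eq_left_of_pos hν hab (by rw [← hu]; linarith)
    rw [hua] at h
    exact ⟨hua, hv ▸ neg_div_eq_left hν hab (by linarith)⟩
  have lower (h : p + ν * u < -τ) : u = b ∧ v = b := by
    have hub : u = b := hu ▸ neg_div_eq_right_of_neg hν hab (by rw [← hu]; linarith)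
    rw [hub] at h
    exact ⟨hub, hv ▸ neg_div_eq_right hν hab (by linarith)⟩
  refine ⟨upper, lower, fun h => ?_⟩
  rcases lt_abs.mp h with h | h
  · rw [(upper h).1, (upper h).2]
  · rw [(lower (by linarith)).1, (lower (by linarith)).2]

/-- Pointwise critical-cone property: if `2|p - q| ≤ τ`, `u = Π_{[a,b]}(-p/ν)` and
`v = Π_{[a,b]}(-q/ν)`, then `p + ν u > τ` forces `u = v = a`, `p + ν u < -τ` forces
`u = v = b`, and in particular `|p + ν u| > τ` implies `v = u`. -/
theorem projection_critical_cone_pointwise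
    (ν τ a b p q u v : ℝ) (hν : 0 < ν) (hτ : 0 < τ) (hab : a ≤ b)
    (hpq : 2 * |p - q| ≤ τ)
    (hu : u = projInterval a b (-p / ν)) (hv : v = projInterval a b (-q / ν)) :
    (τ < p + ν * u → u = a ∧ v = a) ∧
      (p + ν * u < -τ → u = b ∧ v = b) ∧
      (τ < |p + ν * u| → v = u) :=
  projection_critical_cone_pointwise_general ν τ a b p q u v hν hab hpq hu hv
end

section
/- Let (Ω, μ) be a finite measure space, let ν, μ₀, τ, C > 0, and let a ≤ b be real numbers. Let p̄, p̄_T : Ω → ℝ be bounded measurable functions whose difference satisfies ess sup_Ω |p̄ − p̄_T| ≤ min(ν·μ₀/(2C), τ/2). Define ū := Π_{[a,b]}(−p̄/ν) and ũ := Π_{[a,b]}(−p̄_T/ν) pointwise (these are bounded, hence in L²(μ)), and set d := ũ − ū. Let j′ : L²(μ) → (L²(μ) →L[ℝ] ℝ) and assume there is a bilinear-form-valued second derivative along the segment, i.e., for each t ∈ [0,1] a real number Q(t) =: j″(ū + t·d)(d, d) such that t ↦ j′(ū + t·d)(d) is differentiable on [0,1] with derivative Q(t). Assume moreover: (i) (second-order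 condition) j″(ū)(v, v) ≥ μ₀·‖v‖²_{L²(μ)} for every v in the critical cone C_ū^τ; (ii) (perturbation estimate) |Q(t) − Q(0)| ≤ C · (ess sup_Ω |t·d|) · ‖d‖²_{L²(μ)} for all t ∈ [0,1], where j″(ū)(d,d) = Q(0). Then d = ũ − ū belongs to C_ū^τ and (μ₀/2)·‖ū − ũ‖²_{L²(μ)} ≤ (j′(ũ) − j′(ū))(ũ − ū). -/
open MeasureTheory

lemma projInterval_mem_Icc {a b : ℝ} (hab : a ≤ b) (s : ℝ) : projInterval a b s ∈ Set.Icc a b :=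
  ⟨le_min hab (le_max_left a s), min_le_left b _⟩

lemma abs_projInterval_sub_le (a b s t : ℝ) :
    |projInterval a b s - projInterval a b t| ≤ |s - t| := by
  unfold projInterval
  refine (abs_min_sub_min_le_max _ _ _ _).trans ?_
  simpa [max_comm a] using abs_max_sub_max_le_abs s t a

lemma projInterval_eq_of_abs_sub_lt {a b s t : ℝ} (h : |t - s| < |projInterval a b s - s|) :
    projInterval a b t = projInterval a b s := by
  unfold projInterval at *
  rw [abs_lt] at h
  rcases le_total a b with hab | hab
  · rcases lt_or_ge s a with hs | hs
    · rw [max_eq_left hs.le, min_eq_right hab, abs_of_pos (by linarith)] at *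
      rw [max_eq_left (by linarith), min_eq_right hab]
    rcases lt_or_ge b s with hs' | hs'
    · rw [max_eq_right hs, min_eq_left hs'.le, abs_of_neg (by linarith)] at *
      rw [max_eq_right (by linarith), min_eq_left (by linarith)]
    · rw [max_eq_right hs, min_eq_right hs', sub_self, abs_zero] at h
      linarith
  · rw [min_eq_left (hab.trans (le_max_left a s)), min_eq_left (hab.trans (le_max_left a t))]

section

variable {a b ν : ℝ}

lemma abs_projInterval_neg_div_sub_le (hν : 0 < ν) {p q ε : ℝ} (hpq : |p - q| ≤ ν * ε) :
    |projInterval a b (-q / ν) - projInterval a b (-p / ν)| ≤ ε := by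
  refine (abs_projInterval_sub_le a b _ _).trans ?_
  rw [show -q / ν - -p / ν = (p - q) / ν by ring, abs_div, abs_of_pos hν, div_le_iff₀' hν]
  exact hpq

lemma projInterval_neg_div_eq_of_abs_sub_lt (hν : 0 < ν) {p q : ℝ}
    (h : |p - q| < |p + ν * projInterval a b (-p / ν)|) :
    projInterval a b (-q / ν) = projInterval a b (-p / ν) := by
  refine projInterval_eq_of_abs_sub_lt ?_
  have hp : p + ν * projInterval a b (-p / ν) = ν * (projInterval a b (-p / ν) - -p / ν) := by
    field_simp; ring
  have hpq : p - q = ν * (-q / ν - -p / ν) := by field_simp; ring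
  rwa [hp, hpq, abs_mul, abs_mul, abs_of_pos hν, mul_lt_mul_iff_right₀ hν] at h

lemma projInterval_neg_div_sub_mem_criticalCone (hν : 0 < ν) (hab : a ≤ b) {p q τ : ℝ}
    (hpq : |p - q| ≤ τ) :
    (projInterval a b (-p / ν) = a → 0 ≤ projInterval a b (-q / ν) - projInterval a b (-p / ν)) ∧
    (projInterval a b (-p / ν) = b → projInterval a b (-q / ν) - projInterval a b (-p / ν) ≤ 0) ∧
    (τ < |p + ν * projInterval a b (-p / ν)| →
      projInterval a b (-q / ν) - projInterval a b (-p / ν) = 0) := by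
  have hq_mem := projInterval_mem_Icc hab (-q / ν)
  refine ⟨fun ha => ?_, fun hb => ?_, fun hfar => ?_⟩
  · rw [ha]; linarith [hq_mem.1]
  · rw [hb]; linarith [hq_mem.2]
  · rw [sub_eq_zero]
    exact projInterval_neg_div_eq_of_abs_sub_lt hν (hpq.trans_lt hfar)

end

section

variable {Ω : Type*} [MeasurableSpace Ω] {μ : Measure Ω} {f : Ω → ℝ} {K : ℝ}

lemma ae_abs_le_of_eLpNorm_top_le_ofReal (hK : 0 ≤ K)
    (h : eLpNorm f ⊤ μ ≤ ENNReal.ofReal K) : ∀ᵐ x ∂μ, |f x| ≤ K := by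
  rw [eLpNorm_exponent_top] at h
  filter_upwards [ae_le_eLpNormEssSup (f := f) (μ := μ)] with x hx
  rw [Real.enorm_eq_ofReal_abs] at hx
  exact (ENNReal.ofReal_le_ofReal_iff hK).1 (hx.trans h)

lemma toReal_eLpNorm_top_le_of_ae_abs_le (hK : 0 ≤ K) (h : ∀ᵐ x ∂μ, |f x| ≤ K) :
    (eLpNorm f ⊤ μ).toReal ≤ K := by
  refine ENNReal.toReal_le_of_le_ofReal hK ?_
  rw [eLpNorm_exponent_top]
  exact eLpNormEssSup_le_of_ae_bound (by simpa only [Real.norm_eq_abs] using h)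

lemma toReal_eLpNorm_top_const_mul_le_of_ae_abs_le {t : ℝ} (ht : |t| ≤ 1) (hK : 0 ≤ K)
    (h : ∀ᵐ x ∂μ, |f x| ≤ K) : (eLpNorm (fun x => t * f x) ⊤ μ).toReal ≤ K := by
  refine toReal_eLpNorm_top_le_of_ae_abs_le hK ?_
  filter_upwards [h] with x hx
  rw [abs_mul]
  nlinarith [abs_nonneg t, abs_nonneg (f x)]

end

lemma mul_sub_le_sub_of_le_hasDerivAt {f f' : ℝ → ℝ} {x y m : ℝ} (hxy : x ≤ y)
    (hf : ∀ t ∈ Set.Icc x y, HasDerivAt f (f' t) t) (hm : ∀ t ∈ Set.Icc x y, m ≤ f' t) :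
    m * (y - x) ≤ f y - f x := by
  refine (convex_Icc x y).mul_sub_le_image_sub_of_le_deriv
    (fun t ht => (hf t ht).continuousAt.continuousWithinAt)
    (fun t ht => ?_) (fun t ht => ?_) x (Set.left_mem_Icc.2 hxy) y (Set.right_mem_Icc.2 hxy) hxy
  all_goals rw [interior_Icc] at ht
  · exact (hf t (Set.Ioo_subset_Icc_self ht)).differentiableAt.differentiableWithinAt
  · rw [(hf t (Set.Ioo_subset_Icc_self ht)).deriv]
    exact hm t (Set.Ioo_subset_Icc_self ht)

lemma le_sub_of_hasDerivAt_of_abs_sub_le {f f' : ℝ → ℝ} {ε : ℝ}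
    (hf : ∀ t ∈ Set.Icc (0 : ℝ) 1, HasDerivAt f (f' t) t) (h0 : 2 * ε ≤ f' 0)
    (hf' : ∀ t ∈ Set.Icc (0 : ℝ) 1, |f' t - f' 0| ≤ ε) : ε ≤ f 1 - f 0 := by
  simpa using mul_sub_le_sub_of_le_hasDerivAt zero_le_one hf fun t ht => by
    linarith [(abs_le.1 (hf' t ht)).1]

theorem auxiliary_estimate_control_tilde_general
    {Ω : Type*} [MeasurableSpace Ω] (μ : Measure Ω) [IsFiniteMeasure μ]
    (ν μ₀ τ C a b : ℝ) (hν : 0 < ν) (hμ₀ : 0 < μ₀) (hτ : 0 < τ) (hC : 0 < C)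
    (hab : a ≤ b)
    (pbar pT : Ω → ℝ) (hpbarm : Measurable pbar) (hpTm : Measurable pT)
    (hclose : eLpNorm (fun x => pbar x - pT x) ⊤ μ ≤
      ENNReal.ofReal (min (ν * μ₀ / (2 * C)) (τ / 2)))
    (ubar utilde d : Ω → ℝ)
    (hubar : ubar = fun x => projInterval a b (-(pbar x) / ν))
    (hutilde : utilde = fun x => projInterval a b (-(pT x) / ν))
    (hd : d = utilde - ubar)
    (j' : (Ω → ℝ) → ((Ω → ℝ) →ₗ[ℝ] ℝ))
    (B : (Ω → ℝ) →ₗ[ℝ] (Ω → ℝ) →ₗ[ℝ] ℝ)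
    (Q : ℝ → ℝ)
    (hderiv : ∀ t ∈ Set.Icc (0 : ℝ) 1,
      HasDerivAt (fun s : ℝ => j' (ubar + s • d) d) (Q t) t)
    (hQ0 : Q 0 = B d d)
    (hsecond : ∀ v : Ω → ℝ, MemLp v 2 μ →
      (∀ᵐ x ∂μ, (ubar x = a → 0 ≤ v x) ∧ (ubar x = b → v x ≤ 0) ∧
        (τ < |pbar x + ν * ubar x| → v x = 0)) →
      μ₀ * ∫ x, v x ^ 2 ∂μ ≤ B v v)
    (hpert : ∀ t ∈ Set.Icc (0 : ℝ) 1,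
      |Q t - Q 0| ≤ C * (eLpNorm (fun x => t * d x) ⊤ μ).toReal * ∫ x, d x ^ 2 ∂μ) :
    (MemLp d 2 μ ∧
      (∀ᵐ x ∂μ, (ubar x = a → 0 ≤ d x) ∧ (ubar x = b → d x ≤ 0) ∧
        (τ < |pbar x + ν * ubar x| → d x = 0))) ∧
      (μ₀ / 2) * ∫ x, (ubar x - utilde x) ^ 2 ∂μ ≤ j' utilde d - j' ubar d := by
  set K := min (ν * μ₀ / (2 * C)) (τ / 2)
  have hclose_ae : ∀ᵐ x ∂μ, |pbar x - pT x| ≤ K :=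
    ae_abs_le_of_eLpNorm_top_le_ofReal (by positivity) hclose
  have hd_apply (x : Ω) :
      d x = projInterval a b (-(pT x) / ν) - projInterval a b (-(pbar x) / ν) := by
    rw [hd, hutilde, hubar]; rfl
  have hd_small : ∀ᵐ x ∂μ, |d x| ≤ μ₀ / (2 * C) := by
    filter_upwards [hclose_ae] with x hx
    rw [hd_apply]
    exact abs_projInterval_neg_div_sub_le hν
      ((hx.trans (min_le_left _ _)).trans_eq (mul_div_assoc _ _ _))
  have hd_meas : Measurable d := by
    rw [hd, hutilde, hubar]
    exact ((continuous_projInterval a b).measurable.comp (hpTm.neg.div_const ν)).sub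
      ((continuous_projInterval a b).measurable.comp (hpbarm.neg.div_const ν))
  have hd_memLp : MemLp d 2 μ :=
    .of_bound hd_meas.aestronglyMeasurable _ (by simpa only [Real.norm_eq_abs] using hd_small)
  have hd_cone : ∀ᵐ x ∂μ, (ubar x = a → 0 ≤ d x) ∧ (ubar x = b → d x ≤ 0) ∧
      (τ < |pbar x + ν * ubar x| → d x = 0) := by
    filter_upwards [hclose_ae] with x hx
    rw [hubar, hd_apply]
    exact projInterval_neg_div_sub_mem_criticalCone hν hab
      (by linarith [hx.trans (min_le_right _ _)])
  have hQ_near (t : ℝ) (ht : t ∈ Set.Icc (0 : ℝ) 1) : |Q t - Q 0| ≤ μ₀ / 2 * ∫ x, d x ^ 2 ∂μ :=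
    calc |Q t - Q 0| ≤ C * (eLpNorm (fun x => t * d x) ⊤ μ).toReal * ∫ x, d x ^ 2 ∂μ :=
          hpert t ht
      _ ≤ C * (μ₀ / (2 * C)) * ∫ x, d x ^ 2 ∂μ := by
          gcongr
          exact toReal_eLpNorm_top_const_mul_le_of_ae_abs_le
            (abs_le.2 ⟨by linarith [ht.1], ht.2⟩) (by positivity) hd_small
      _ = μ₀ / 2 * ∫ x, d x ^ 2 ∂μ := by field_simp
  have hgrowth := le_sub_of_hasDerivAt_of_abs_sub_le hderiv
    (by linarith [hsecond d hd_memLp hd_cone]) hQ_near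
  have hend : ubar + (1 : ℝ) • d = utilde := by rw [one_smul, hd, add_sub_cancel]
  rw [hend, zero_smul, add_zero] at hgrowth
  have hsq : ∫ x, (ubar x - utilde x) ^ 2 ∂μ = ∫ x, d x ^ 2 ∂μ :=
    integral_congr_ae (.of_forall fun x => by simp only [hd, Pi.sub_apply]; ring)
  exact ⟨⟨hd_memLp, hd_cone⟩, hsq ▸ hgrowth⟩

/-- Auxiliary estimate (Theorem 4.8 of the paper): if the discrete adjoint `p̄_T` is
close enough to `p̄` in `L^∞`, namely `ess sup |p̄ - p̄_T| ≤ min (ν μ₀ / (2C), τ/2)`,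
then `d = ũ - ū ∈ C_ū^τ` and `(μ₀/2) ‖ū - ũ‖²_{L²} ≤ (j'(ũ) - j'(ū))(ũ - ū)`,
where `ū = Π_{[a,b]}(-p̄/ν)`, `ũ = Π_{[a,b]}(-p̄_T/ν)`, `j''(ū) = B` satisfies the
second-order condition on the critical cone, and `Q(t) = j''(ū + t d)(d,d)` is the
derivative of `t ↦ j'(ū + t d)(d)` with the stated perturbation bound. -/
theorem auxiliary_estimate_control_tilde
    {Ω : Type*} [MeasurableSpace Ω] (μ : Measure Ω) [IsFiniteMeasure μ]
    (ν μ₀ τ C a b : ℝ) (hν : 0 < ν) (hμ₀ : 0 < μ₀) (hτ : 0 < τ) (hC : 0 < C)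
    (hab : a ≤ b)
    (pbar pT : Ω → ℝ) (hpbarm : Measurable pbar) (hpTm : Measurable pT)
    (hpbarb : ∃ M : ℝ, ∀ x, |pbar x| ≤ M) (hpTb : ∃ M : ℝ, ∀ x, |pT x| ≤ M)
    (hclose : eLpNorm (fun x => pbar x - pT x) ⊤ μ ≤
      ENNReal.ofReal (min (ν * μ₀ / (2 * C)) (τ / 2)))
    (ubar utilde d : Ω → ℝ)
    (hubar : ubar = fun x => projInterval a b (-(pbar x) / ν))
    (hutilde : utilde = fun x => projInterval a b (-(pT x) / ν))
    (hd : d = utilde - ubar)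
    (j' : (Ω → ℝ) → ((Ω → ℝ) →ₗ[ℝ] ℝ))
    (B : (Ω → ℝ) →ₗ[ℝ] (Ω → ℝ) →ₗ[ℝ] ℝ)
    (Q : ℝ → ℝ)
    (hderiv : ∀ t ∈ Set.Icc (0 : ℝ) 1,
      HasDerivAt (fun s : ℝ => j' (ubar + s • d) d) (Q t) t)
    (hQ0 : Q 0 = B d d)
    (hsecond : ∀ v : Ω → ℝ, MemLp v 2 μ →
      (∀ᵐ x ∂μ, (ubar x = a → 0 ≤ v x) ∧ (ubar x = b → v x ≤ 0) ∧
        (τ < |pbar x + ν * ubar x| → v x = 0)) →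
      μ₀ * ∫ x, v x ^ 2 ∂μ ≤ B v v)
    (hpert : ∀ t ∈ Set.Icc (0 : ℝ) 1,
      |Q t - Q 0| ≤ C * (eLpNorm (fun x => t * d x) ⊤ μ).toReal * ∫ x, d x ^ 2 ∂μ) :
    (MemLp d 2 μ ∧
      (∀ᵐ x ∂μ, (ubar x = a → 0 ≤ d x) ∧ (ubar x = b → d x ≤ 0) ∧
        (τ < |pbar x + ν * ubar x| → d x = 0))) ∧
      (μ₀ / 2) * ∫ x, (ubar x - utilde x) ^ 2 ∂μ ≤ j' utilde d - j' ubar d :=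
  auxiliary_estimate_control_tilde_general μ ν μ₀ τ C a b hν hμ₀ hτ hC hab pbar pT hpbarm hpTm
    hclose ubar utilde d hubar hutilde hd j' B Q hderiv hQ0 hsecond hpert
end

section
/- Let H be a real inner product space, let U ⊆ H, let ū, ũ ∈ U, let p̄, p̃, p̄_T ∈ H, and let ν > 0 and μ > 0. Assume: (i) ⟨p̄ + ν·ū, u − ū⟩ ≥ 0 for all u ∈ U; (ii) ⟨p̄_T + ν·ũ, u − ũ⟩ ≥ 0 for all u ∈ U; (iii) (μ/2)·‖ũ − ū‖² ≤ ⟨(p̃ + ν·ũ) − (p̄ + ν·ū), ũ − ū⟩. Then (μ/2)·‖ũ − ū‖² ≤ ⟨p̃ − p̄_T, ũ − ū⟩, and consequently ‖ū − ũ‖ ≤ (2/μ)·‖p̃ − p̄_T‖. -/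
open scoped RealInnerProductSpace

/-!
Testing the optimality condition of `ū` at `ũ` and the variational inequality of `ũ` at `ū` and
adding the two gives `⟪(p̄_T + ν ũ) - (p̄ + ν ū), ũ - ū⟫ ≤ 0`; subtracting this from the
second-order estimate leaves `(μ/2) ‖ũ - ū‖² ≤ ⟪p̃ - p̄_T, ũ - ū⟫`. Cauchy–Schwarz and division by
`‖ũ - ū‖` then give the error bound.
-/

section

variable {H : Type*} [NormedAddCommGroup H] [InnerProductSpace ℝ H]

theorem inner_sub_nonpos_of_variational_inequalities {a b x y : H}
    (hx : 0 ≤ ⟪a, y - x⟫) (hy : 0 ≤ ⟪b, x - y⟫) : ⟪b - a, y - x⟫ ≤ 0 := by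
  rw [← neg_sub y x, inner_neg_right] at hy
  rw [inner_sub_left]
  linarith

theorem mul_norm_le_norm_of_mul_sq_le_inner {c : ℝ} {x y : H}
    (h : c * ‖x‖ ^ 2 ≤ ⟪y, x⟫) : c * ‖x‖ ≤ ‖y‖ := by
  rcases (norm_nonneg x).eq_or_lt with hx | hx
  · rw [← hx, mul_zero]
    exact norm_nonneg y
  · have : c * ‖x‖ * ‖x‖ ≤ ‖y‖ * ‖x‖ := by
      rw [mul_assoc, ← sq]
      exact h.trans (real_inner_le_norm y x)
    exact le_of_mul_le_mul_right this hx

end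

theorem control_error_bound_general
    {H : Type*} [NormedAddCommGroup H] [InnerProductSpace ℝ H]
    (U : Set H) (ubar utilde : H) (hubar : ubar ∈ U) (hutilde : utilde ∈ U)
    (pbar ptilde pT : H) (ν μ : ℝ) (hμ : 0 < μ)
    (h₁ : ∀ u ∈ U, 0 ≤ ⟪pbar + ν • ubar, u - ubar⟫)
    (h₂ : ∀ u ∈ U, 0 ≤ ⟪pT + ν • utilde, u - utilde⟫)
    (h₃ : (μ / 2) * ‖utilde - ubar‖ ^ 2 ≤
      ⟪(ptilde + ν • utilde) - (pbar + ν • ubar), utilde - ubar⟫) :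
    (μ / 2) * ‖utilde - ubar‖ ^ 2 ≤ ⟪ptilde - pT, utilde - ubar⟫ ∧
      ‖ubar - utilde‖ ≤ (2 / μ) * ‖ptilde - pT‖ := by
  have hmonotone : ⟪(pT + ν • utilde) - (pbar + ν • ubar), utilde - ubar⟫ ≤ 0 :=
    inner_sub_nonpos_of_variational_inequalities (h₁ utilde hutilde) (h₂ ubar hubar)
  have hsplit : (ptilde + ν • utilde) - (pbar + ν • ubar) =
      (ptilde - pT) + ((pT + ν • utilde) - (pbar + ν • ubar)) := by abel
  have hestimate : (μ / 2) * ‖utilde - ubar‖ ^ 2 ≤ ⟪ptilde - pT, utilde - ubar⟫ := by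
    rw [hsplit, inner_add_left] at h₃
    linarith
  refine ⟨hestimate, ?_⟩
  have hbound := mul_norm_le_norm_of_mul_sq_le_inner hestimate
  rw [norm_sub_rev, div_mul_eq_mul_div, le_div_iff₀ hμ]
  linarith

/-- Abstract control-error bound: from the continuous and auxiliary variational
inequalities and the second-order estimate, one gets
`(μ/2) ‖ũ - ū‖² ≤ ⟪p̃ - p̄_T, ũ - ū⟫`, hence `‖ū - ũ‖ ≤ (2/μ) ‖p̃ - p̄_T‖`. -/
theorem control_error_bound
    {H : Type*} [NormedAddCommGroup H] [InnerProductSpace ℝ H]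
    (U : Set H) (ubar utilde : H) (hubar : ubar ∈ U) (hutilde : utilde ∈ U)
    (pbar ptilde pT : H) (ν μ : ℝ) (hν : 0 < ν) (hμ : 0 < μ)
    (h₁ : ∀ u ∈ U, 0 ≤ ⟪pbar + ν • ubar, u - ubar⟫)
    (h₂ : ∀ u ∈ U, 0 ≤ ⟪pT + ν • utilde, u - utilde⟫)
    (h₃ : (μ / 2) * ‖utilde - ubar‖ ^ 2 ≤
      ⟪(ptilde + ν • utilde) - (pbar + ν • ubar), utilde - ubar⟫) :
    (μ / 2) * ‖utilde - ubar‖ ^ 2 ≤ ⟪ptilde - pT, utilde - ubar⟫ ∧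
      ‖ubar - utilde‖ ≤ (2 / μ) * ‖ptilde - pT‖ :=
  control_error_bound_general U ubar utilde hubar hutilde pbar ptilde pT ν μ hμ h₁ h₂ h₃
end
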